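/- Suppose that, regarding G as a transitive subgroup of the symmetric group S_d (via its left regular action on itself, identified with the action on the d conjugate roots of F), G is contained in the alternating group A_d. Then for every integer i ≥ 0, a_{K_j,i} = (1/det Γ_ξ) · Tr_{L/ℚ}( ξ^i · Σ_{τ∈K_j} ∂_τ(ξ) ), where Tr_{L/ℚ}(η) = Σ_{σ∈G} σ(η). -/

import Mathlib

open scoped BigOperators

/-- The group matrix `Γ = [X_{στ⁻¹}]` of a finite group `G`, over `ℚ[X_σ : σ ∈ G]`. -/
noncomputable def groupMatrix (G : Type*) [Group G] [Fintype G] [DecidableEq G] :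
    Matrix G G (MvPolynomial G ℚ) :=
  Matrix.of fun σ τ : G => MvPolynomial.X (σ * τ⁻¹)

/-- `∂_τ = (1/|G|) ∂(det Γ)/∂X_τ`. -/
noncomputable def groupDetDeriv (G : Type*) [Group G] [Fintype G] [DecidableEq G] (τ : G) :
    MvPolynomial G ℚ :=
  ((Fintype.card G : ℚ))⁻¹ • MvPolynomial.pderiv τ (groupMatrix G).det

/-!
Put `Γ = Γ_ξ` and `S = Σ_{τ∈K} ∂_τ(ξ)`. The sequence `n ↦ Tr(ξⁿ S) / det Γ` satisfies the recurrence
with characteristic polynomial `F`, because every conjugate `σξ` is a root of `F`; so it suffices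
to compare the first `d` terms, i.e. to show `Γ (σ⁻¹ S)_σ = det Γ · κ_K`.

By Jacobi's formula `∂_τ(ξ)` is the entry `(1, τ)` of `adj Γ`. Applying `ρ ∈ G` to the entries
of `Γ` permutes its rows by left multiplication by `ρ`, an even permutation, so `ρ` shifts the
row `(adj Γ)_{1,·}` by `ρ`. Combined with `Γ · adj Γ = det Γ` and the conjugation invariance of
`K`, this gives the identity. Finally `det Γ ≠ 0` by Dedekind's independence of characters, since
the conjugates of `ξ` form a basis.
-/

open scoped Matrix

namespace Derivation

variable {R A M : Type*} [CommSemiring R] [CommSemiring A] [AddCommMonoid M] [Algebra R A]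
  [Module A M] [Module R M] (D : Derivation R A M)

theorem map_finset_prod {ι : Type*} [DecidableEq ι] (s : Finset ι) (f : ι → A) :
    D (∏ i ∈ s, f i) = ∑ i ∈ s, (∏ j ∈ s.erase i, f j) • D (f i) := by
  induction s using Finset.induction_on with
  | empty => simp
  | @insert a s ha ih =>
    rw [Finset.prod_insert ha, D.leibniz, ih, Finset.smul_sum, Finset.sum_insert ha,
      Finset.erase_insert ha, add_comm]
    congr 1
    refine Finset.sum_congr rfl fun i hi => ?_
    rw [Finset.erase_insert_of_ne (ne_of_mem_of_not_mem hi ha).symm,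
      Finset.prod_insert (fun h => ha (Finset.mem_of_mem_erase h)), smul_smul]

end Derivation

namespace Matrix

variable {n R : Type*} [Fintype n] [DecidableEq n] [CommRing R]

theorem derivation_det_eq_sum_det_updateCol {A : Type*} [CommRing A] [Algebra R A]
    (D : Derivation R A A) (M : Matrix n n A) :
    D M.det = ∑ i, (M.updateCol i fun k => D (M k i)).det := by
  simp only [det_apply, map_sum, Units.smul_def, map_zsmul, D.map_finset_prod, Finset.smul_sum]
  rw [Finset.sum_comm]
  refine Finset.sum_congr rfl fun i _ => Finset.sum_congr rfl fun σ _ => ?_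
  rw [← Finset.prod_erase_mul _ _ (Finset.mem_univ i), updateCol_self, smul_eq_mul]
  congr 2
  exact Finset.prod_congr rfl fun j hj => (updateCol_ne (Finset.ne_of_mem_erase hj)).symm

theorem derivation_det {A : Type*} [CommRing A] [Algebra R A] (D : Derivation R A A)
    (M : Matrix n n A) : D M.det = (M.adjugate * M.map D).trace := by
  rw [derivation_det_eq_sum_det_updateCol]
  refine Finset.sum_congr rfl fun i _ => ?_
  rw [← cramer_apply, cramer_eq_adjugate_mulVec]
  rfl

theorem adjugate_permMatrix (e : Equiv.Perm n) :
    (e.permMatrix R).adjugate = (Equiv.Perm.sign e : R) • (e⁻¹).permMatrix R := by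
  calc (e.permMatrix R).adjugate
      = (e.permMatrix R).adjugate * (e.permMatrix R * (e⁻¹).permMatrix R) := by
        rw [← permMatrix_mul, inv_mul_cancel, permMatrix_one, Matrix.mul_one]
    _ = (Equiv.Perm.sign e : R) • (e⁻¹).permMatrix R := by
        rw [← Matrix.mul_assoc, adjugate_mul, det_permutation, smul_one_mul]

theorem adjugate_submatrix_perm_id (e : Equiv.Perm n) (M : Matrix n n R) :
    (M.submatrix e id).adjugate = (Equiv.Perm.sign e : R) • M.adjugate.submatrix id e := by
  rw [← PEquiv.toMatrix_toPEquiv_mul, adjugate_mul_distrib, adjugate_permMatrix, mul_smul_comm,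
    PEquiv.mul_toMatrix_toPEquiv]
  rfl

end Matrix

theorem ConjClasses.sum_ite_mem_mul_comm {G M : Type*} [Group G] [Fintype G] [AddCommMonoid M]
    (K : ConjClasses G) [DecidablePred (· ∈ K.carrier)] (h : G → M) (t : G) :
    (∑ u, if u ∈ K.carrier then h (t * u) else 0) =
      ∑ u, if u ∈ K.carrier then h (u * t) else 0 := by
  refine Fintype.sum_equiv (MulAut.conj t).toEquiv _ _ fun u => ?_
  have hconj : t * u * t⁻¹ ∈ K.carrier ↔ u ∈ K.carrier := by
    simp only [ConjClasses.mem_carrier_iff_mk_eq, ConjClasses.mk_eq_mk_iff_isConj.2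
      (isConj_iff.2 ⟨t, rfl⟩).symm]
  simp [hconj]

section GroupMatrix

variable {G R : Type*} [Group G]

def groupMatrixOf (f : G → R) : Matrix G G R :=
  Matrix.of fun σ τ => f (σ * τ⁻¹)

variable (f : G → R)

@[simp]
theorem groupMatrixOf_apply (σ τ : G) : groupMatrixOf f σ τ = f (σ * τ⁻¹) := rfl

theorem groupMatrixOf_submatrix_mulRight (g : G) :
    (groupMatrixOf f).submatrix (Equiv.mulRight g) (Equiv.mulRight g) = groupMatrixOf f := by
  ext σ τ
  simp [mul_assoc]

variable [Fintype G] [DecidableEq G] [CommRing R]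

theorem adjugate_groupMatrixOf_mul_right (σ τ g : G) :
    (groupMatrixOf f).adjugate (σ * g) (τ * g) = (groupMatrixOf f).adjugate σ τ := by
  conv_rhs => rw [← groupMatrixOf_submatrix_mulRight f g, Matrix.adjugate_submatrix_equiv_self]
  rfl

theorem sum_mul_adjugate_groupMatrixOf (σ u : G) :
    ∑ t, f (σ * t) * (groupMatrixOf f).adjugate 1 (u * t) =
      if σ = u then (groupMatrixOf f).det else 0 := by
  have h := congrFun₂ (Matrix.mul_adjugate (groupMatrixOf f)) (σ * u⁻¹) 1
  simp only [Matrix.mul_apply, Matrix.smul_apply, Matrix.one_apply, mul_inv_eq_one, smul_eq_mul,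
    mul_ite, mul_one, mul_zero] at h
  rw [← h]
  refine Fintype.sum_equiv ((Equiv.mulLeft u).trans (Equiv.inv G)) _ _ fun t => ?_
  rw [← adjugate_groupMatrixOf_mul_right f 1 (u * t) (u * t)⁻¹]
  simp [mul_assoc]

theorem groupMatrixOf_mulVec_classSum (K : ConjClasses G) [DecidablePred (· ∈ K.carrier)] :
    groupMatrixOf f *ᵥ
        (fun τ => ∑ u, if u ∈ K.carrier then (groupMatrixOf f).adjugate 1 (τ⁻¹ * u) else 0) =
      (groupMatrixOf f).det • fun σ => if σ ∈ K.carrier then 1 else 0 := by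
  funext σ
  calc _ = ∑ t, f (σ * t) *
        ∑ u, (if u ∈ K.carrier then (groupMatrixOf f).adjugate 1 (u * t) else 0) := by
        refine Fintype.sum_equiv (Equiv.inv G) _ _ fun τ => ?_
        rw [Equiv.inv_apply, ← ConjClasses.sum_ite_mem_mul_comm]
        rfl
    _ = ∑ u, if u ∈ K.carrier then
          ∑ t, f (σ * t) * (groupMatrixOf f).adjugate 1 (u * t) else 0 := by
        simp only [Finset.mul_sum, mul_ite, mul_zero]
        rw [Finset.sum_comm]
        simp only [Finset.sum_ite_irrel, Finset.sum_const_zero]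
    _ = _ := by
        simp only [sum_mul_adjugate_groupMatrixOf, ← ite_and, and_comm (a := _ ∈ K.carrier)]
        simp [ite_and]

theorem map_adjugate_groupMatrixOf_one (φ : R →+* R) (g : G) (hφ : ∀ x, φ (f x) = f (g * x))
    (τ : G) : φ ((groupMatrixOf f).adjugate 1 τ) =
      (Equiv.Perm.sign (Equiv.mulLeft g) : R) * (groupMatrixOf f).adjugate 1 (g * τ) := by
  have hmap : φ.mapMatrix (groupMatrixOf f) = (groupMatrixOf f).submatrix (Equiv.mulLeft g) id := by
    ext σ τ
    simp [hφ, mul_assoc]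
  have h := congrFun₂ (φ.map_adjugate (groupMatrixOf f)) 1 τ
  rw [hmap, Matrix.adjugate_submatrix_perm_id] at h
  simpa using h

end GroupMatrix

section GroupDeterminant

variable {G : Type*} [Group G] [Fintype G] [DecidableEq G]

theorem groupMatrix_eq_groupMatrixOf : groupMatrix G = groupMatrixOf MvPolynomial.X := rfl

theorem pderiv_det_groupMatrix (τ : G) :
    MvPolynomial.pderiv τ (groupMatrix G).det = Fintype.card G • (groupMatrix G).adjugate 1 τ := by
  rw [groupMatrix_eq_groupMatrixOf, Matrix.derivation_det]
  have hcol : ∀ σ, ∑ ρ, (groupMatrixOf MvPolynomial.X).adjugate σ ρ *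
      MvPolynomial.pderiv τ (MvPolynomial.X (ρ * σ⁻¹) : MvPolynomial G ℚ) =
        (groupMatrixOf MvPolynomial.X).adjugate 1 τ := by
    intro σ
    simp only [MvPolynomial.pderiv_X, Pi.single_apply, mul_inv_eq_iff_eq_mul, mul_ite, mul_one,
      mul_zero, Finset.sum_ite_eq', Finset.mem_univ, if_true]
    simpa using adjugate_groupMatrixOf_mul_right MvPolynomial.X 1 τ σ
  simp only [Matrix.trace, Matrix.diag, Matrix.mul_apply, Matrix.map_apply, groupMatrixOf_apply,
    hcol, Finset.sum_const, Finset.card_univ]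

theorem groupDetDeriv_eq_adjugate (τ : G) : groupDetDeriv G τ = (groupMatrix G).adjugate 1 τ := by
  rw [groupDetDeriv, pderiv_det_groupMatrix, ← Nat.cast_smul_eq_nsmul ℚ, smul_smul,
    inv_mul_cancel₀ (Nat.cast_ne_zero.2 Fintype.card_ne_zero), one_smul]

theorem aeval_groupDetDeriv {A : Type*} [CommRing A] [Algebra ℚ A] (f : G → A) (τ : G) :
    MvPolynomial.aeval f (groupDetDeriv G τ) = (groupMatrixOf f).adjugate 1 τ := by
  have hmap : (MvPolynomial.aeval f).toRingHom.mapMatrix (groupMatrix G) = groupMatrixOf f := by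
    ext σ ρ
    simp [groupMatrix_eq_groupMatrixOf]
  rw [groupDetDeriv_eq_adjugate, ← hmap, ← RingHom.map_adjugate]
  rfl

end GroupDeterminant

section CommRing

variable {k L : Type*} [CommSemiring k] [CommRing L] [Algebra k L]

variable (k) in
def galoisGroupMatrix (ξ : L) : Matrix (L ≃ₐ[k] L) (L ≃ₐ[k] L) L :=
  groupMatrixOf fun σ => σ ξ

variable [Fintype (L ≃ₐ[k] L)]

theorem galoisGroupMatrix_mulVec_classSum [DecidableEq (L ≃ₐ[k] L)] (ξ : L)
    (hAlt : ∀ γ : L ≃ₐ[k] L, Equiv.Perm.sign (Equiv.mulLeft γ) = 1)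
    (K : ConjClasses (L ≃ₐ[k] L)) [DecidablePred (· ∈ K.carrier)] :
    galoisGroupMatrix k ξ *ᵥ
        (fun σ => σ⁻¹ (∑ τ, if τ ∈ K.carrier then (galoisGroupMatrix k ξ).adjugate 1 τ else 0)) =
      (galoisGroupMatrix k ξ).det • fun σ => if σ ∈ K.carrier then 1 else 0 := by
  rw [galoisGroupMatrix, ← groupMatrixOf_mulVec_classSum]
  congr 1
  funext σ
  rw [map_sum]
  refine Finset.sum_congr rfl fun τ _ => ?_
  have hshift := map_adjugate_groupMatrixOf_one (fun σ : L ≃ₐ[k] L => σ ξ)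
    ((σ⁻¹ : L ≃ₐ[k] L) : L →+* L) σ⁻¹ (fun _ => rfl) τ
  rw [hAlt] at hshift
  simp only [RingHom.coe_coe, Units.val_one, Int.cast_one, one_mul] at hshift
  rw [apply_ite (σ⁻¹ : L ≃ₐ[k] L), map_zero, hshift]

theorem LinearRecurrence.isSolution_mul_sum_algEquiv_pow_mul (E : LinearRecurrence L)
    (hE : ∀ (σ : L ≃ₐ[k] L) i, σ (E.coeffs i) = E.coeffs i) {x : L} (hx : E.IsSolution (x ^ ·))
    (y z : L) : E.IsSolution fun n => z * ∑ σ : L ≃ₐ[k] L, σ (x ^ n * y) := by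
  intro n
  simp only [hx n, Finset.sum_mul, map_sum, map_mul, hE, Finset.mul_sum]
  rw [Finset.sum_comm]
  exact Finset.sum_congr rfl fun _ _ => Finset.sum_congr rfl fun _ _ => by ring

end CommRing

section Field

variable {k L : Type*} [Field k] [Field L] [Algebra k L] [Fintype (L ≃ₐ[k] L)]
  [DecidableEq (L ≃ₐ[k] L)]

theorem det_algEquiv_apply_basis_ne_zero (b : Module.Basis (L ≃ₐ[k] L) k L) :
    (Matrix.of fun σ τ : L ≃ₐ[k] L => σ (b τ)).det ≠ 0 := by
  intro h
  obtain ⟨v, hv0, hv⟩ := Matrix.exists_vecMul_eq_zero_iff.mpr h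
  have hli := (linearIndependent_toLinearMap k L L).comp (fun σ : L ≃ₐ[k] L => (σ : L →ₐ[k] L))
    fun σ τ hστ => AlgEquiv.coe_toAlgHom_injective hστ
  refine hv0 (funext (Fintype.linearIndependent_iff.mp hli v (b.ext fun τ => ?_)))
  simpa [Matrix.vecMul, dotProduct] using congrFun hv τ

theorem det_galoisGroupMatrix_ne_zero (ξ : L) (b : Module.Basis (L ≃ₐ[k] L) k L)
    (hb : ∀ σ, b σ = σ ξ) : (galoisGroupMatrix k ξ).det ≠ 0 := by
  have hperm : galoisGroupMatrix k ξ =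
      (Matrix.of fun σ τ : L ≃ₐ[k] L => σ (b τ)).submatrix id (Equiv.inv _) := by
    ext σ τ
    simp [galoisGroupMatrix, hb]
  rw [hperm, Matrix.det_permute']
  exact mul_ne_zero ((Units.isUnit _).map (Int.castRingHom L)).ne_zero
    (det_algEquiv_apply_basis_ne_zero b)

theorem inv_galoisGroupMatrix_mulVec_classIndicator (ξ : L)
    (hAlt : ∀ γ : L ≃ₐ[k] L, Equiv.Perm.sign (Equiv.mulLeft γ) = 1)
    (K : ConjClasses (L ≃ₐ[k] L)) [DecidablePred (· ∈ K.carrier)]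
    (hdet : (galoisGroupMatrix k ξ).det ≠ 0) :
    (galoisGroupMatrix k ξ)⁻¹ *ᵥ (fun σ => if σ ∈ K.carrier then 1 else 0) =
      (galoisGroupMatrix k ξ).det⁻¹ •
        fun σ => σ⁻¹ (∑ τ, if τ ∈ K.carrier then (galoisGroupMatrix k ξ).adjugate 1 τ else 0) := by
  have := Matrix.invertibleOfIsUnitDet _ (isUnit_iff_ne_zero.2 hdet)
  refine Matrix.inv_mulVec_eq_vec ?_
  rw [Matrix.mulVec_smul, galoisGroupMatrix_mulVec_classSum ξ hAlt K, smul_smul,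
    inv_mul_cancel₀ hdet, one_smul]

end Field

theorem stmt2_general (L : Type*) [Field L] [CharZero L] [FiniteDimensional ℚ L]
    [DecidableEq (L ≃ₐ[ℚ] L)]
    (d : ℕ)
    (c : Fin d → ℤ) (F : Polynomial ℤ)
    (hF : F = Polynomial.X ^ d + ∑ j : Fin d, Polynomial.C (c j) * Polynomial.X ^ (j : ℕ))
    (ξ : L) (hξ : Polynomial.aeval ξ F = 0)
    (hNB : ∃ b : Module.Basis (L ≃ₐ[ℚ] L) ℚ L, ∀ σ : L ≃ₐ[ℚ] L, b σ = σ ξ)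
    (hAlt : ∀ γ : L ≃ₐ[ℚ] L, Equiv.Perm.sign (Equiv.mulLeft γ) = 1)
    (K : ConjClasses (L ≃ₐ[ℚ] L)) [DecidablePred (· ∈ K.carrier)]
    (a : ℕ → ℚ)
    (ha : ∀ i, a (i + d) = -∑ j : Fin d, (c j : ℚ) * a (i + (j : ℕ)))
    (hinit : ∀ i : Fin d, algebraMap ℚ L (a (i : ℕ)) =
      ∑ σ : L ≃ₐ[ℚ] L, (σ⁻¹ ξ) ^ (i : ℕ) *
        ((Matrix.of fun σ' τ' : L ≃ₐ[ℚ] L => (σ' * τ'⁻¹) ξ)⁻¹.mulVec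
          (fun τ : L ≃ₐ[ℚ] L => if τ ∈ K.carrier then (1 : L) else 0)) σ) :
    ∀ i : ℕ, algebraMap ℚ L (a i) =
      ((Matrix.of fun σ' τ' : L ≃ₐ[ℚ] L => (σ' * τ'⁻¹) ξ).det)⁻¹ *
        ∑ σ : L ≃ₐ[ℚ] L,
          σ (ξ ^ i * ∑ τ : L ≃ₐ[ℚ] L,
            if τ ∈ K.carrier then
              MvPolynomial.aeval (fun ρ : L ≃ₐ[ℚ] L => ρ ξ) (groupDetDeriv _ τ)
            else 0) := by
  intro i
  obtain ⟨b, hb⟩ := hNB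
  have hΓ : (Matrix.of fun σ' τ' : L ≃ₐ[ℚ] L => (σ' * τ'⁻¹) ξ) = galoisGroupMatrix ℚ ξ := rfl
  have hderiv : ∀ τ, MvPolynomial.aeval (fun ρ : L ≃ₐ[ℚ] L => ρ ξ) (groupDetDeriv _ τ) =
      (galoisGroupMatrix ℚ ξ).adjugate 1 τ := aeval_groupDetDeriv _
  simp only [hΓ, hderiv] at hinit ⊢
  set M := galoisGroupMatrix ℚ ξ
  set S := ∑ τ, if τ ∈ K.carrier then M.adjugate 1 τ else 0
  have hinv : M⁻¹ *ᵥ (fun τ => if τ ∈ K.carrier then 1 else 0) = M.det⁻¹ • fun σ => σ⁻¹ S :=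
    inv_galoisGroupMatrix_mulVec_classIndicator ξ hAlt K (det_galoisGroupMatrix_ne_zero ξ b hb)
  let E : LinearRecurrence L := ⟨d, fun j => -(c j : L)⟩
  have hξE : E.IsSolution (ξ ^ ·) := by
    refine (E.geom_sol_iff_root_charPoly ξ).2 ?_
    simpa [E, LinearRecurrence.charPoly, hF, Polynomial.eval_finsetSum] using hξ
  have haE : E.IsSolution fun n => algebraMap ℚ L (a n) := fun n => by simp [E, ha]
  have htE := E.isSolution_mul_sum_algEquiv_pow_mul (k := ℚ) (fun σ j => by simp [E]) hξE S M.det⁻¹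
  refine congrFun ((E.eq_iff_eqOn_range_order _ _ haE htE).2 fun n hn => ?_) i
  refine (hinit ⟨n, Finset.mem_range.1 hn⟩).trans ?_
  rw [hinv]
  dsimp only
  rw [Finset.mul_sum]
  refine Fintype.sum_equiv (Equiv.inv _) _ _ fun σ => ?_
  simp only [Pi.smul_apply, smul_eq_mul, Equiv.inv_apply, map_mul, map_pow]
  ring

/-- Suppose that `G = Gal(L/ℚ)`, viewed as a permutation group via its left regular
action, is contained in the alternating group, i.e. left multiplication by every `γ ∈ G`
is an even permutation of `G`.  Then for every `i ≥ 0`,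
`a_{K,i} = (1/det Γ_ξ) · Tr_{L/ℚ}(ξ^i Σ_{τ∈K} ∂_τ(ξ))`, where `(a_{K,i})_i ∈ RS(F,ℚ)` is
the sequence whose first `d` terms are the column of `P Γ_ξ⁻¹ κ` corresponding to the
conjugacy class `K`, and `Tr_{L/ℚ}(η) = Σ_{σ∈G} σ(η)`. -/
theorem stmt2 (L : Type*) [Field L] [CharZero L] [FiniteDimensional ℚ L] [IsGalois ℚ L]
    [DecidableEq (L ≃ₐ[ℚ] L)]
    (d : ℕ) (hd : 0 < d) (hdeg : Module.finrank ℚ L = d)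
    (c : Fin d → ℤ) (F : Polynomial ℤ)
    (hF : F = Polynomial.X ^ d + ∑ j : Fin d, Polynomial.C (c j) * Polynomial.X ^ (j : ℕ))
    (hFirr : Irreducible (F.map (Int.castRingHom ℚ)))
    (ξ : L) (hξ : Polynomial.aeval ξ F = 0)
    (hNB : ∃ b : Module.Basis (L ≃ₐ[ℚ] L) ℚ L, ∀ σ : L ≃ₐ[ℚ] L, b σ = σ ξ)
    (hAlt : ∀ γ : L ≃ₐ[ℚ] L, Equiv.Perm.sign (Equiv.mulLeft γ) = 1)
    (K : ConjClasses (L ≃ₐ[ℚ] L)) [DecidablePred (· ∈ K.carrier)]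
    (a : ℕ → ℚ)
    (ha : ∀ i, a (i + d) = -∑ j : Fin d, (c j : ℚ) * a (i + (j : ℕ)))
    (hinit : ∀ i : Fin d, algebraMap ℚ L (a (i : ℕ)) =
      ∑ σ : L ≃ₐ[ℚ] L, (σ⁻¹ ξ) ^ (i : ℕ) *
        ((Matrix.of fun σ' τ' : L ≃ₐ[ℚ] L => (σ' * τ'⁻¹) ξ)⁻¹.mulVec
          (fun τ : L ≃ₐ[ℚ] L => if τ ∈ K.carrier then (1 : L) else 0)) σ) :
    ∀ i : ℕ, algebraMap ℚ L (a i) =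
      ((Matrix.of fun σ' τ' : L ≃ₐ[ℚ] L => (σ' * τ'⁻¹) ξ).det)⁻¹ *
        ∑ σ : L ≃ₐ[ℚ] L,
          σ (ξ ^ i * ∑ τ : L ≃ₐ[ℚ] L,
            if τ ∈ K.carrier then
              MvPolynomial.aeval (fun ρ : L ≃ₐ[ℚ] L => ρ ξ) (groupDetDeriv _ τ)
            else 0) :=
  stmt2_general L d c F hF ξ hξ hNB hAlt K a ha hinit
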